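/- Let g : ℝ → ℝ be twice differentiable with |g(s)| ≤ 1 and |g''(s)| ≤ M for all s ∈ ℝ. Then for all a ≥ 1/4 and b ≥ 1: | ∫₀^∞ exp(−a(s−b)²)·g(s) ds − √(π/a)·g(b) | ≤ (√π/4)·M·a^{−3/2} + a^{−1/2}·b^{−1}·exp(−a·b). -/

import Mathlib

/-!
Split the integral over `(0, ∞)` into the integral over `ℝ` minus the one over `(-∞, 0]`.
Over `ℝ`, replace `g` by its first-order Taylor polynomial at `b`: the Gaussian moments of order
0 and 1 turn it into `√(π/a) g(b)`, and the remainder `|g s - g b - g' b (s - b)| ≤ M (s - b)²/2`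
integrates against the Gaussian to `(√π/4) M a^{-3/2}`. Over `(-∞, 0]`, use `|g| ≤ 1` and insert
the factor `(b - s)/b ≥ 1`, which makes the Gaussian explicitly integrable:
`∫_{-∞}^0 (b - s)/b e^{-a(s-b)²} ds = e^{-ab²}/(2ab) ≤ a^{-1/2} b⁻¹ e^{-ab}` for `a ≥ 1/4`, `b ≥ 1`.
-/

open Real MeasureTheory Set Filter

theorem exists_ratio_hasDerivAt_eq_ratio_slope_uIoo {f f' g g' : ℝ → ℝ} {a b : ℝ}
    (hab : a ≠ b) (hf : ∀ x, HasDerivAt f (f' x) x) (hg : ∀ x, HasDerivAt g (g' x) x) :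
    ∃ c ∈ uIoo a b, (g b - g a) * f' c = (f b - f a) * g' c := by
  rcases hab.lt_or_gt with h | h
  · obtain ⟨c, hc, hslope⟩ := exists_ratio_hasDerivAt_eq_ratio_slope f f' h
      (fun x _ => (hf x).continuousAt.continuousWithinAt) (fun x _ => hf x)
      g g' (fun x _ => (hg x).continuousAt.continuousWithinAt) (fun x _ => hg x)
    exact ⟨c, by rwa [uIoo_of_le h.le], hslope⟩
  · obtain ⟨c, hc, hslope⟩ := exists_ratio_hasDerivAt_eq_ratio_slope f f' h
      (fun x _ => (hf x).continuousAt.continuousWithinAt) (fun x _ => hf x)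
      g g' (fun x _ => (hg x).continuousAt.continuousWithinAt) (fun x _ => hg x)
    exact ⟨c, by rwa [uIoo_of_ge h.le], by linarith⟩

theorem abs_sub_sub_deriv_mul_le {f : ℝ → ℝ} {M : ℝ} (hf : Differentiable ℝ f)
    (hf' : Differentiable ℝ (deriv f)) (hM : ∀ x, |deriv (deriv f) x| ≤ M) (x₀ x : ℝ) :
    |f x - f x₀ - deriv f x₀ * (x - x₀)| ≤ M / 2 * (x - x₀) ^ 2 := by
  rcases eq_or_ne x₀ x with rfl | hx
  · simp
  have hrem : ∀ t, HasDerivAt ((fun t => f t - f x₀) - fun t => deriv f x₀ * (t - x₀))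
      (deriv f t - deriv f x₀) t := fun t => by
    simpa using ((hf t).hasDerivAt.sub_const (f x₀)).sub
      (((hasDerivAt_id t).sub_const x₀).const_mul (deriv f x₀))
  have hsq : ∀ t, HasDerivAt ((fun t => t - x₀) ^ 2) (2 * (t - x₀)) t := fun t => by
    simpa using ((hasDerivAt_id t).sub_const x₀).pow 2
  -- Cauchy's mean value theorem for the remainder against `(t - x₀) ^ 2`, then the ordinary one
  -- for `deriv f` between `x₀` and the intermediate point.
  obtain ⟨c, hc, hslope⟩ := exists_ratio_hasDerivAt_eq_ratio_slope_uIoo hx hrem hsq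
  have hc₀ : 0 < |c - x₀| :=
    abs_pos.2 (sub_ne_zero.2 (ne_of_mem_of_not_mem hc left_notMem_uIoo))
  have hlip : |deriv f c - deriv f x₀| ≤ M * |c - x₀| := by
    simpa [norm_eq_abs] using convex_univ.norm_image_sub_le_of_norm_deriv_le
      (fun y _ => hf' y) (fun y _ => hM y) (mem_univ x₀) (mem_univ c)
  simp only [Pi.pow_apply, Pi.sub_apply, sub_self, ne_eq, OfNat.ofNat_ne_zero, not_false_eq_true,
    zero_pow, sub_zero, mul_zero] at hslope
  have habs := congrArg abs hslope
  rw [abs_mul, abs_mul, abs_mul, abs_two, abs_of_nonneg (sq_nonneg _)] at habs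
  have hscaled : |f x - f x₀ - deriv f x₀ * (x - x₀)| * (2 * |c - x₀|) ≤
      M / 2 * (x - x₀) ^ 2 * (2 * |c - x₀|) := by
    rw [← habs]
    nlinarith [mul_le_mul_of_nonneg_left hlip (sq_nonneg (x - x₀))]
  exact le_of_mul_le_mul_right hscaled (by positivity)

theorem integral_mul_exp_neg_mul_sq_eq_zero (a : ℝ) :
    ∫ x : ℝ, x * exp (-a * x ^ 2) = 0 := by
  have h := integral_neg_eq_self (fun x : ℝ => x * exp (-a * x ^ 2)) volume
  simp only [neg_sq, neg_mul, integral_neg] at h ⊢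
  linarith

theorem integral_sq_mul_exp_neg_mul_sq {a : ℝ} (ha : 0 < a) :
    ∫ x : ℝ, x ^ 2 * exp (-a * x ^ 2) = √π / 2 * a ^ (-(3 : ℝ) / 2) := by
  have hhalf := integral_rpow_mul_exp_neg_mul_rpow (p := 2) (q := 2) two_pos (by norm_num) ha
  have hGamma : Gamma (3 / 2) = √π / 2 := by
    rw [show (3 / 2 : ℝ) = 1 / 2 + 1 by norm_num, Gamma_add_one (by norm_num), Gamma_one_half_eq]
    ring
  have heven := integral_comp_abs (f := fun x => x ^ 2 * exp (-a * x ^ 2))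
  simp only [sq_abs] at heven
  simp only [rpow_two] at hhalf
  rw [heven, hhalf]
  norm_num [hGamma]
  ring

theorem abs_integral_exp_neg_mul_sub_sq_mul_sub_le {g : ℝ → ℝ} {M a : ℝ}
    (hg : Differentiable ℝ g) (hg' : Differentiable ℝ (deriv g))
    (hg'' : ∀ s, |deriv (deriv g) s| ≤ M) (ha : 0 < a) (b : ℝ)
    (hint : Integrable (fun s => exp (-a * (s - b) ^ 2) * g s)) :
    |(∫ s, exp (-a * (s - b) ^ 2) * g s) - √(π / a) * g b| ≤
      √π / 4 * M * a ^ (-(3 : ℝ) / 2) := by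
  have hint₀ : Integrable (fun s => exp (-a * (s - b) ^ 2)) :=
    (integrable_exp_neg_mul_sq ha).comp_sub_right b
  have hint₁ : Integrable (fun s => (s - b) * exp (-a * (s - b) ^ 2)) :=
    (integrable_mul_exp_neg_mul_sq ha).comp_sub_right b
  have hint₂ : Integrable (fun s => (s - b) ^ 2 * exp (-a * (s - b) ^ 2)) := by
    simpa [rpow_two] using
      (integrable_rpow_mul_exp_neg_mul_sq ha (s := 2) (by norm_num)).comp_sub_right b
  have hmoment₀ : ∫ s, exp (-a * (s - b) ^ 2) = √(π / a) := by
    rw [integral_sub_right_eq_self (fun x => exp (-a * x ^ 2)), integral_gaussian]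
  have hmoment₁ : ∫ s, (s - b) * exp (-a * (s - b) ^ 2) = 0 := by
    rw [integral_sub_right_eq_self (fun x => x * exp (-a * x ^ 2)),
      integral_mul_exp_neg_mul_sq_eq_zero]
  have hmoment₂ :
      ∫ s, (s - b) ^ 2 * exp (-a * (s - b) ^ 2) = √π / 2 * a ^ (-(3 : ℝ) / 2) := by
    rw [integral_sub_right_eq_self (fun x => x ^ 2 * exp (-a * x ^ 2)),
      integral_sq_mul_exp_neg_mul_sq ha]
  have hremainder : (∫ s, exp (-a * (s - b) ^ 2) * g s) - √(π / a) * g b =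
      ∫ s, exp (-a * (s - b) ^ 2) * (g s - g b - deriv g b * (s - b)) := by
    calc (∫ s, exp (-a * (s - b) ^ 2) * g s) - √(π / a) * g b
        = (∫ s, exp (-a * (s - b) ^ 2) * g s) - ((∫ s, exp (-a * (s - b) ^ 2) * g b) +
            ∫ s, (s - b) * exp (-a * (s - b) ^ 2) * deriv g b) := by
          rw [integral_mul_const, integral_mul_const, hmoment₀, hmoment₁]
          ring
      _ = _ := by
          have hlinear : Integrable fun s =>
              exp (-a * (s - b) ^ 2) * g b + (s - b) * exp (-a * (s - b) ^ 2) * deriv g b :=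
            (hint₀.mul_const _).add (hint₁.mul_const _)
          rw [← integral_add (hint₀.mul_const _) (hint₁.mul_const _), ← integral_sub hint hlinear]
          congr 1 with s
          ring
  rw [hremainder, ← norm_eq_abs]
  calc ‖∫ s, exp (-a * (s - b) ^ 2) * (g s - g b - deriv g b * (s - b))‖
      ≤ ∫ s, M / 2 * ((s - b) ^ 2 * exp (-a * (s - b) ^ 2)) := by
        refine norm_integral_le_of_norm_le (hint₂.const_mul _) (Eventually.of_forall fun s => ?_)
        rw [norm_mul, norm_of_nonneg (exp_pos _).le, norm_eq_abs]
        calc exp (-a * (s - b) ^ 2) * |g s - g b - deriv g b * (s - b)|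
            ≤ exp (-a * (s - b) ^ 2) * (M / 2 * (s - b) ^ 2) := by
              gcongr
              exact abs_sub_sub_deriv_mul_le hg hg' hg'' b s
          _ = M / 2 * ((s - b) ^ 2 * exp (-a * (s - b) ^ 2)) := by ring
    _ = √π / 4 * M * a ^ (-(3 : ℝ) / 2) := by
        rw [integral_const_mul, hmoment₂]
        ring

theorem integral_Iic_zero_exp_neg_mul_sub_sq_le {a b : ℝ} (ha : 0 < a) (hb : 0 < b) :
    ∫ s in Iic 0, exp (-a * (s - b) ^ 2) ≤ exp (-a * b ^ 2) / (2 * a * b) := by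
  have hderiv : ∀ s ∈ Iic (0 : ℝ), HasDerivAt (fun s => exp (-a * (s - b) ^ 2) / (2 * a))
      ((b - s) * exp (-a * (s - b) ^ 2)) s := fun s _ => by
    refine ((((hasDerivAt_id' s).sub_const b).pow 2 |>.const_mul (-a)).exp.div_const
      (2 * a)).congr_deriv ?_
    field_simp
    norm_num
    ring
  have hint : Integrable (fun s => (b - s) * exp (-a * (s - b) ^ 2)) := by
    convert ((integrable_mul_exp_neg_mul_sq ha).comp_sub_right b).neg using 2 with s
    simp only [Pi.neg_apply]
    ring
  have hlim : Tendsto (fun s => exp (-a * (s - b) ^ 2) / (2 * a)) atBot (nhds 0) := by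
    have hsq : Tendsto (fun s : ℝ => (s - b) ^ 2) atBot atTop := by
      have hshift := tendsto_atBot_add_const_right atBot (-b) tendsto_id
      simpa [sq, ← sub_eq_add_neg] using hshift.atBot_mul_atBot₀ hshift
    simpa using (tendsto_exp_atBot.comp (hsq.const_mul_atTop_of_neg (neg_lt_zero.2 ha))).div_const
      (2 * a)
  have hprimitive := integral_Iic_of_hasDerivAt_of_tendsto' hderiv hint.integrableOn hlim
  calc ∫ s in Iic 0, exp (-a * (s - b) ^ 2)
      ≤ ∫ s in Iic 0, (b - s) * exp (-a * (s - b) ^ 2) / b := by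
        refine setIntegral_mono_on ((integrable_exp_neg_mul_sq ha).comp_sub_right b).integrableOn
          (hint.div_const b).integrableOn measurableSet_Iic fun s hs => ?_
        rw [le_div_iff₀ hb]
        have : b ≤ b - s := by linarith [mem_Iic.1 hs]
        nlinarith [exp_pos (-a * (s - b) ^ 2)]
    _ = exp (-a * b ^ 2) / (2 * a * b) := by
        rw [integral_div, hprimitive, zero_sub, neg_sq, sub_zero, div_div]

theorem exp_neg_mul_sq_div_le {a b : ℝ} (ha : 1 / 4 ≤ a) (hb : 1 ≤ b) :
    exp (-a * b ^ 2) / (2 * a * b) ≤ a ^ (-(1 : ℝ) / 2) * b⁻¹ * exp (-(a * b)) := by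
  have ha₀ : 0 < a := by linarith
  have hsqrt : a ^ (-(1 : ℝ) / 2) = (√a)⁻¹ := by
    rw [neg_div, rpow_neg ha₀.le, sqrt_eq_rpow]
  have hsqrt_le : √a ≤ 2 * a := by
    rw [sqrt_le_left (by positivity)]
    nlinarith
  have hexp : exp (-a * b ^ 2) ≤ exp (-(a * b)) := by
    rw [exp_le_exp]
    nlinarith [mul_le_mul_of_nonneg_left hb (mul_nonneg ha₀.le (zero_le_one.trans hb))]
  calc exp (-a * b ^ 2) / (2 * a * b) ≤ exp (-(a * b)) / (√a * b) := by gcongr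
    _ = a ^ (-(1 : ℝ) / 2) * b⁻¹ * exp (-(a * b)) := by
        rw [hsqrt]
        field_simp

theorem laplace_approximation_bound
    (g : ℝ → ℝ) (M : ℝ)
    (hg : Differentiable ℝ g) (hg' : Differentiable ℝ (deriv g))
    (hgb : ∀ s : ℝ, |g s| ≤ 1) (hg'' : ∀ s : ℝ, |deriv (deriv g) s| ≤ M) :
    ∀ a : ℝ, 1 / 4 ≤ a → ∀ b : ℝ, 1 ≤ b →
      |(∫ s in Set.Ioi (0 : ℝ), Real.exp (-a * (s - b) ^ 2) * g s) -
          Real.sqrt (π / a) * g b| ≤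
        Real.sqrt π / 4 * M * a ^ (-(3 : ℝ) / 2) +
          a ^ (-(1 : ℝ) / 2) * b⁻¹ * Real.exp (-(a * b)) := by
  intro a ha b hb
  have ha₀ : 0 < a := by linarith
  have hweight : Integrable (fun s => exp (-a * (s - b) ^ 2)) :=
    (integrable_exp_neg_mul_sq ha₀).comp_sub_right b
  have hbound : ∀ s, ‖exp (-a * (s - b) ^ 2) * g s‖ ≤ exp (-a * (s - b) ^ 2) := fun s => by
    rw [norm_mul, norm_of_nonneg (exp_pos _).le, norm_eq_abs]
    exact mul_le_of_le_one_right (exp_pos _).le (hgb s)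
  have hint : Integrable (fun s => exp (-a * (s - b) ^ 2) * g s) :=
    hweight.mono' (hweight.aestronglyMeasurable.mul hg.continuous.aestronglyMeasurable)
      (ae_of_all _ hbound)
  have htail : |∫ s in Iic 0, exp (-a * (s - b) ^ 2) * g s| ≤
      a ^ (-(1 : ℝ) / 2) * b⁻¹ * exp (-(a * b)) :=
    (norm_integral_le_of_norm_le hweight.integrableOn (ae_of_all _ hbound)).trans
      ((integral_Iic_zero_exp_neg_mul_sub_sq_le ha₀ (by linarith)).trans
        (exp_neg_mul_sq_div_le ha hb))
  have hsplit : ∫ s in Ioi 0, exp (-a * (s - b) ^ 2) * g s =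
      (∫ s, exp (-a * (s - b) ^ 2) * g s) - ∫ s in Iic 0, exp (-a * (s - b) ^ 2) * g s := by
    rw [← intervalIntegral.integral_Iic_add_Ioi hint.integrableOn hint.integrableOn]
    ring
  rw [hsplit, sub_right_comm]
  exact (abs_sub _ _).trans (add_le_add
    (abs_integral_exp_neg_mul_sub_sq_mul_sub_le hg hg' hg'' ha₀ b hint) htail)
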